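/- Let M be a positive integer, let J be a finite family of jobs, and let OPT be a subfamily of J of maximum cardinality among those forming an M-machine schedule. Assign each job of J independently and uniformly at random to one of M machines, and for each machine p let N_p denote the maximum cardinality of a pairwise disjoint subfamily of the jobs of J assigned to machine p. Then the expected value of N_1 + ... + N_M is at least |OPT| / (2 - 1/M) = M * |OPT| / (2M - 1). Consequently, solving a maximum independent set of intervals (exactly) on each machine after uniformly random job-to-machine assignment yields a (2 - 1/M)-approximation of optimal unweighted interval scheduling on M machines in expectation. -/

import Mathlib

/-- A finite family of jobs (intervals `[s, e]`, represented as pairs `(s, e)`)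
is pairwise disjoint. -/
def JobsDisjoint (F : Finset (ℝ × ℝ)) : Prop :=
  ∀ j ∈ F, ∀ j' ∈ F, j ≠ j' → Disjoint (Set.Icc j.1 j.2) (Set.Icc j'.1 j'.2)

/-- A finite family of jobs forms an `M`-machine schedule. -/
def IsMSchedule (M : ℕ) (F : Finset (ℝ × ℝ)) : Prop :=
  ∃ f : ℝ × ℝ → Fin M, ∀ j ∈ F, ∀ j' ∈ F, j ≠ j' → f j = f j' →
    Disjoint (Set.Icc j.1 j.2) (Set.Icc j'.1 j'.2)

open scoped Classical in
/-- The maximum cardinality of a pairwise disjoint subfamily of `F`. -/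
noncomputable def maxIS (F : Finset (ℝ × ℝ)) : ℕ :=
  (F.powerset.filter JobsDisjoint).sup Finset.card

/-!
On each machine, select greedily by earliest end point among the jobs of `OPT` assigned to it.
A job of `OPT` that is not selected is blocked by a selected job `s` on the same machine that
ends no later than it does and whose end point it contains. Since `OPT` is an `M`-machine schedule,
at most `M - 1` jobs of `OPT` other than `s` contain the end point of `s`, and each of them lands
on the machine of `s` with probability `1 / M` independently of whether `s` is selected (which
depends only on the jobs ending no later than `s`). So the expected number of blocked jobs is at
most `(M - 1) / M` times the expected number of selected ones, while the two add up to `|OPT|`.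
-/

open Finset
open scoped Classical

theorem Finset.exists_list_pairwise_gt_of_injective {α β : Type*} [LinearOrder β] {f : α → β}
    (hf : Function.Injective f) (S : Finset α) :
    ∃ L : List α, (∀ x, x ∈ L ↔ x ∈ S) ∧ L.Pairwise (fun a b => f b < f a) := by
  refine ⟨S.toList.mergeSort (fun a b => decide (f b ≤ f a)), by simp, ?_⟩
  have hle := List.pairwise_mergeSort (le := fun a b => decide (f b ≤ f a))
    (fun _ _ _ h₁ h₂ => by simp only [decide_eq_true_eq] at *; exact h₂.trans h₁)
    (fun a b => by simpa using le_total (f b) (f a)) S.toList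
  have hnodup := (List.mergeSort_perm S.toList (fun a b => decide (f b ≤ f a))).nodup_iff.mpr
    S.nodup_toList
  exact (hle.and hnodup).imp fun ⟨h, hne⟩ =>
    lt_of_le_of_ne (by simpa using h) fun h' => hne (hf h').symm

def endKey (j : ℝ × ℝ) : ℝ ×ₗ ℝ := toLex (j.2, j.1)

theorem endKey_injective : Function.Injective endKey := by
  intro a b h
  simp only [endKey, toLex_inj, Prod.mk.injEq] at h
  exact Prod.ext h.2 h.1

theorem le_of_endKey_lt {a b : ℝ × ℝ} (h : endKey a < endKey b) : a.2 ≤ b.2 := by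
  rcases Prod.lex_def.mp h with h | h
  · exact h.le
  · exact h.1.le

/-- Greedy selection of pairwise disjoint jobs, scanning the list from its last element to its
first; on a list sorted by decreasing `endKey` this is earliest-end-first. -/
noncomputable def greedy : List (ℝ × ℝ) → List (ℝ × ℝ)
  | [] => []
  | a :: t =>
    if ∀ s ∈ greedy t, Disjoint (Set.Icc a.1 a.2) (Set.Icc s.1 s.2) then a :: greedy t
    else greedy t

theorem greedy_cons_eq_or (a : ℝ × ℝ) (t : List (ℝ × ℝ)) :
    greedy (a :: t) = a :: greedy t ∨ greedy (a :: t) = greedy t := by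
  rw [greedy]; split_ifs <;> simp

theorem greedy_sublist : ∀ l : List (ℝ × ℝ), (greedy l).Sublist l
  | [] => by simp [greedy]
  | a :: t => by
    rcases greedy_cons_eq_or a t with h | h <;> rw [h]
    · exact (greedy_sublist t).cons_cons a
    · exact (greedy_sublist t).cons a

theorem mem_greedy_cons_of_mem {a s : ℝ × ℝ} {t : List (ℝ × ℝ)} (h : s ∈ greedy t) :
    s ∈ greedy (a :: t) := by
  rcases greedy_cons_eq_or a t with h' | h' <;> simp [h', h]

theorem pairwise_disjoint_greedy : ∀ l : List (ℝ × ℝ),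
    (greedy l).Pairwise fun a b => Disjoint (Set.Icc a.1 a.2) (Set.Icc b.1 b.2)
  | [] => by simp [greedy]
  | a :: t => by
    rw [greedy]
    split_ifs with h
    · exact List.pairwise_cons.mpr ⟨h, pairwise_disjoint_greedy t⟩
    · exact pairwise_disjoint_greedy t

theorem jobsDisjoint_greedy (l : List (ℝ × ℝ)) : JobsDisjoint (greedy l).toFinset := by
  have : Std.Symm fun a b : ℝ × ℝ => Disjoint (Set.Icc a.1 a.2) (Set.Icc b.1 b.2) :=
    ⟨fun _ _ h => h.symm⟩
  intro a ha b hb hne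
  exact (pairwise_disjoint_greedy l).forall (List.mem_toFinset.mp ha) (List.mem_toFinset.mp hb)
    hne

theorem exists_mem_greedy_of_not_mem {l : List (ℝ × ℝ)}
    (hl : l.Pairwise fun a b => endKey b < endKey a) {j : ℝ × ℝ} (hj : j ∈ l)
    (hj' : j ∉ greedy l) :
    ∃ s ∈ greedy l, endKey s < endKey j ∧ ¬Disjoint (Set.Icc j.1 j.2) (Set.Icc s.1 s.2) := by
  induction l with
  | nil => simp at hj
  | cons a t ih =>
    obtain ⟨ha, ht⟩ := List.pairwise_cons.mp hl
    rcases List.mem_cons.mp hj with rfl | hj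
    · have : ¬∀ s ∈ greedy t, Disjoint (Set.Icc j.1 j.2) (Set.Icc s.1 s.2) := by
        intro h; apply hj'; rw [greedy, if_pos h]; exact List.mem_cons_self
      obtain ⟨s, hs, hd⟩ := not_forall₂.mp this
      exact ⟨s, mem_greedy_cons_of_mem hs, ha s ((greedy_sublist t).subset hs), hd⟩
    · obtain ⟨s, hs, hlt, hd⟩ := ih ht hj fun h => hj' (mem_greedy_cons_of_mem h)
      exact ⟨s, mem_greedy_cons_of_mem hs, hlt, hd⟩

theorem mem_greedy_iff_mem_greedy_filter {l : List (ℝ × ℝ)}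
    (hl : l.Pairwise fun a b => endKey b < endKey a) (s : ℝ × ℝ) :
    s ∈ greedy l ↔ s ∈ greedy (l.filter fun x => endKey x ≤ endKey s) := by
  induction l with
  | nil => simp
  | cons a t ih =>
    obtain ⟨ha, ht⟩ := List.pairwise_cons.mp hl
    by_cases has : endKey a ≤ endKey s
    · rw [List.filter_cons_of_pos (by simpa using has), List.filter_eq_self.mpr]
      intro x hx
      simpa using ((ha x hx).trans_le has).le
    · have hsa : s ≠ a := by rintro rfl; exact has le_rfl
      rw [List.filter_cons_of_neg (by simpa using has), ← ih ht]
      rcases greedy_cons_eq_or a t with h | h <;> simp [h, hsa]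

theorem IsMSchedule.mono {M : ℕ} {F G : Finset (ℝ × ℝ)} (h : IsMSchedule M F) (hGF : G ⊆ F) :
    IsMSchedule M G :=
  let ⟨f, hf⟩ := h
  ⟨f, fun j hj j' hj' => hf j (hGF hj) j' (hGF hj')⟩

theorem IsMSchedule.card_le_of_forall_mem {M : ℕ} {F : Finset (ℝ × ℝ)} (h : IsMSchedule M F)
    (x : ℝ) (hx : ∀ j ∈ F, x ∈ Set.Icc j.1 j.2) : #F ≤ M := by
  obtain ⟨f, hf⟩ := h
  calc #F ≤ #(univ : Finset (Fin M)) :=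
        card_le_card_of_injOn f (fun _ _ => mem_coe.mpr (mem_univ _)) fun j hj j' hj' hff =>
          by_contra fun hne => Set.disjoint_left.mp (hf j hj j' hj' hne hff) (hx j hj) (hx j' hj')
    _ = M := by simp

theorem card_le_maxIS {T F : Finset (ℝ × ℝ)} (hTF : T ⊆ F) (hT : JobsDisjoint T) :
    #T ≤ maxIS F :=
  le_sup (f := Finset.card) (mem_filter.mpr ⟨mem_powerset.mpr hTF, hT⟩)

/-- The jobs of `S` that a selected job `s` can block. -/
noncomputable def blockers (S : Finset (ℝ × ℝ)) (s : ℝ × ℝ) : Finset (ℝ × ℝ) :=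
  S.filter fun j => endKey s < endKey j ∧ s.2 ∈ Set.Icc j.1 j.2

theorem card_blockers_add_one_le {M : ℕ} {S : Finset (ℝ × ℝ)} (hS : IsMSchedule M S)
    {s : ℝ × ℝ} (hs : s ∈ S) (hs' : s.1 ≤ s.2) : #(blockers S s) + 1 ≤ M := by
  have hsB : s ∉ blockers S s := fun h => lt_irrefl _ (mem_filter.mp h).2.1
  rw [← card_insert_of_notMem hsB]
  refine (hS.mono (insert_subset hs (filter_subset _ _))).card_le_of_forall_mem s.2 ?_
  intro j hj
  rcases mem_insert.mp hj with rfl | hj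
  · exact ⟨hs', le_rfl⟩
  · exact (mem_filter.mp hj).2.2

theorem Fintype.card_mul_card_filter_apply_eq {α β : Type*} [Fintype α] [DecidableEq α]
    [Fintype β] (a : α) (b : β) {P : (α → β) → Prop}
    (hP : ∀ g g' : α → β, (∀ x ≠ a, g x = g' x) → (P g ↔ P g')) :
    Fintype.card β * #{g | P g ∧ g a = b} = #{g | P g} := by
  have hfiber (v : β) : #{g ∈ univ.filter P | g a = v} = #{g | P g ∧ g a = b} := by
    have hupdate (g : α → β) (c : β) : P (Function.update g a c) ↔ P g :=
      hP _ _ fun x hx => Function.update_of_ne hx _ _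
    refine card_bij' (fun g _ => Function.update g a b) (fun g _ => Function.update g a v)
      ?_ ?_ ?_ ?_ <;> intro g hg <;> simp only [mem_filter, mem_univ, true_and] at hg ⊢
    · exact ⟨(hupdate g b).mpr hg.1, Function.update_self _ _ _⟩
    · exact ⟨(hupdate g v).mpr hg.1, Function.update_self _ _ _⟩
    · rw [Function.update_idem, ← hg.2, Function.update_eq_self]
    · rw [Function.update_idem, ← hg.2, Function.update_eq_self]
  rw [card_eq_sum_card_fiberwise (f := fun g => g a) (s := univ.filter P) (t := univ)
    fun _ _ => mem_coe.mpr (mem_univ _)]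
  simp only [hfiber, sum_const, card_univ, smul_eq_mul]

noncomputable def assigned {M : ℕ} (J : Finset (ℝ × ℝ)) (g : ↥J → Fin M) (q : Fin M) :
    Finset (ℝ × ℝ) :=
  (J.attach.filter fun j => g j = q).image Subtype.val

theorem mem_assigned {M : ℕ} {J : Finset (ℝ × ℝ)} {g : ↥J → Fin M} {q : Fin M} {x : ℝ × ℝ} :
    x ∈ assigned J g q ↔ ∃ h : x ∈ J, g ⟨x, h⟩ = q := by
  simp [assigned]

section GreedyOnMachine

variable {M : ℕ} {L : List (ℝ × ℝ)} {J S : Finset (ℝ × ℝ)}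

variable (L J) in
noncomputable def greedyOn (g : ↥J → Fin M) (q : Fin M) : Finset (ℝ × ℝ) :=
  (greedy (L.filter (· ∈ assigned J g q))).toFinset

theorem mem_greedyOn {g : ↥J → Fin M} {q : Fin M} {x : ℝ × ℝ} :
    x ∈ greedyOn L J g q ↔ x ∈ greedy (L.filter (· ∈ assigned J g q)) :=
  List.mem_toFinset

theorem mem_of_mem_greedyOn {g : ↥J → Fin M} {q : Fin M} {x : ℝ × ℝ}
    (h : x ∈ greedyOn L J g q) : x ∈ L ∧ x ∈ assigned J g q := by
  simpa using (greedy_sublist _).subset (mem_greedyOn.mp h)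

theorem card_greedyOn_le_maxIS (g : ↥J → Fin M) (q : Fin M) :
    #(greedyOn L J g q) ≤ maxIS (assigned J g q) :=
  card_le_maxIS (fun _ hx => (mem_of_mem_greedyOn hx).2) (jobsDisjoint_greedy _)

theorem mem_greedyOn_iff_of_eqOn (hL : L.Pairwise fun a b => endKey b < endKey a)
    {s j : ℝ × ℝ} (hj : j ∈ J) (hsj : endKey s < endKey j) {g g' : ↥J → Fin M}
    (hgg' : ∀ x ≠ ⟨j, hj⟩, g x = g' x) (q : Fin M) :
    s ∈ greedyOn L J g q ↔ s ∈ greedyOn L J g' q := by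
  have hfilter : ((L.filter (· ∈ assigned J g q)).filter fun x => endKey x ≤ endKey s) =
      (L.filter (· ∈ assigned J g' q)).filter fun x => endKey x ≤ endKey s := by
    simp only [List.filter_filter]
    refine List.filter_congr fun x _ => ?_
    by_cases hx : endKey x ≤ endKey s
    · have hxj : x ≠ j := by rintro rfl; exact hsj.not_ge hx
      have hgx (h : x ∈ J) : g ⟨x, h⟩ = g' ⟨x, h⟩ :=
        hgg' _ fun h' => hxj (congrArg Subtype.val h')
      simp only [hx, decide_true, Bool.true_and, mem_assigned, hgx]
    · simp [hx]
  rw [mem_greedyOn, mem_greedyOn, mem_greedy_iff_mem_greedy_filter (hL.filter _),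
    mem_greedy_iff_mem_greedy_filter (hL.filter _), hfilter]

theorem card_mul_card_filter_mem_greedyOn (hL : L.Pairwise fun a b => endKey b < endKey a)
    {s j : ℝ × ℝ} (hj : j ∈ J) (hsj : endKey s < endKey j) (q : Fin M) :
    M * #{g : ↥J → Fin M | s ∈ greedyOn L J g q ∧ j ∈ assigned J g q} =
      #{g : ↥J → Fin M | s ∈ greedyOn L J g q} := by
  have := Fintype.card_mul_card_filter_apply_eq (⟨j, hj⟩ : ↥J) q
    fun g g' h => mem_greedyOn_iff_of_eqOn hL hj hsj h q
  convert this using 4 with g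
  · simp
  · simp [mem_assigned, hj]

variable (L J S) in
noncomputable def blockedCount (g : ↥J → Fin M) (q : Fin M) : ℕ :=
  ∑ s ∈ S, #{j ∈ blockers S s | s ∈ greedyOn L J g q ∧ j ∈ assigned J g q}

theorem card_filter_assigned_le (hL : L.Pairwise fun a b => endKey b < endKey a)
    (hLS : ∀ x, x ∈ L ↔ x ∈ S) (g : ↥J → Fin M) (q : Fin M) :
    #{x ∈ S | x ∈ assigned J g q} ≤ #(greedyOn L J g q) + blockedCount L J S g q := by
  refine (card_le_card (t := greedyOn L J g q ∪ S.biUnion fun s =>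
    {j ∈ blockers S s | s ∈ greedyOn L J g q ∧ j ∈ assigned J g q}) ?_).trans
    ((card_union_le _ _).trans (add_le_add_right card_biUnion_le _))
  intro j hj
  obtain ⟨hjS, hjq⟩ := mem_filter.mp hj
  by_cases hsel : j ∈ greedyOn L J g q
  · exact mem_union_left _ hsel
  have hjl : j ∈ L.filter (· ∈ assigned J g q) :=
    List.mem_filter.mpr ⟨(hLS j).mpr hjS, by simpa using hjq⟩
  obtain ⟨s, hs, hsj, hd⟩ :=
    exists_mem_greedy_of_not_mem (hL.filter _) hjl (mt mem_greedyOn.mpr hsel)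
  have hs' : s ∈ greedyOn L J g q := mem_greedyOn.mpr hs
  obtain ⟨x, hxj, hxs⟩ := Set.not_disjoint_iff.mp hd
  refine mem_union_right _ (mem_biUnion.mpr ⟨s, (hLS s).mp (mem_of_mem_greedyOn hs').1, ?_⟩)
  exact mem_filter.mpr ⟨mem_filter.mpr ⟨hjS, hsj, hxj.1.trans hxs.2, le_of_endKey_lt hsj⟩,
    hs', hjq⟩

theorem card_le_sum_greedyOn_add_blockedCount (hL : L.Pairwise fun a b => endKey b < endKey a)
    (hLS : ∀ x, x ∈ L ↔ x ∈ S) (hSJ : S ⊆ J) (g : ↥J → Fin M) :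
    #S ≤ ∑ q, (#(greedyOn L J g q) + blockedCount L J S g q) :=
  calc #S ≤ ∑ q, #{x ∈ S | x ∈ assigned J g q} :=
        (card_le_card fun x hx => mem_biUnion.mpr ⟨g ⟨x, hSJ hx⟩, mem_univ _,
          mem_filter.mpr ⟨hx, mem_assigned.mpr ⟨hSJ hx, rfl⟩⟩⟩).trans card_biUnion_le
    _ ≤ _ := sum_le_sum fun q _ => card_filter_assigned_le hL hLS g q

theorem sum_card_greedyOn (hLS : ∀ x, x ∈ L ↔ x ∈ S) (q : Fin M) :
    ∑ g : ↥J → Fin M, #(greedyOn L J g q) = ∑ s ∈ S, #{g | s ∈ greedyOn L J g q} := by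
  have hsub (g : ↥J → Fin M) : {s ∈ S | s ∈ greedyOn L J g q} = greedyOn L J g q := by
    rw [filter_mem_eq_inter, inter_eq_right]
    exact fun s hs => (hLS s).mp (mem_of_mem_greedyOn hs).1
  calc ∑ g : ↥J → Fin M, #(greedyOn L J g q)
      = ∑ g : ↥J → Fin M, #{s ∈ S | s ∈ greedyOn L J g q} :=
        sum_congr rfl fun g _ => by rw [hsub]
    _ = _ := sum_card_bipartiteAbove_eq_sum_card_bipartiteBelow _

theorem mul_sum_blockedCount (hL : L.Pairwise fun a b => endKey b < endKey a) (hSJ : S ⊆ J)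
    (q : Fin M) :
    M * ∑ g : ↥J → Fin M, blockedCount L J S g q =
      ∑ s ∈ S, #(blockers S s) * #{g | s ∈ greedyOn L J g q} := by
  simp only [blockedCount]
  rw [sum_comm, mul_sum]
  refine sum_congr rfl fun s _ => ?_
  have hswap := sum_card_bipartiteAbove_eq_sum_card_bipartiteBelow (s := univ)
    (t := blockers S s) (r := fun (g : ↥J → Fin M) j => s ∈ greedyOn L J g q ∧ j ∈ assigned J g q)
  simp only [bipartiteAbove, bipartiteBelow] at hswap
  rw [hswap, mul_sum, ← smul_eq_mul, ← sum_const]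
  refine sum_congr rfl fun j hj => ?_
  obtain ⟨hjS, hsj, -⟩ := mem_filter.mp hj
  exact card_mul_card_filter_mem_greedyOn hL (hSJ hjS) hsj q

end GreedyOnMachine

theorem mul_pow_card_mul_card_add_le {M : ℕ} {L : List (ℝ × ℝ)} {J S : Finset (ℝ × ℝ)}
    (hS : IsMSchedule M S) (hSJ : S ⊆ J) (hjobs : ∀ j ∈ S, j.1 ≤ j.2)
    (hL : L.Pairwise fun a b => endKey b < endKey a) (hLS : ∀ x, x ∈ L ↔ x ∈ S) :
    M * (M ^ #J * #S) + ∑ g : ↥J → Fin M, ∑ q, #(greedyOn L J g q) ≤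
      2 * M * ∑ g : ↥J → Fin M, ∑ q, #(greedyOn L J g q) := by
  set A := ∑ g : ↥J → Fin M, ∑ q, #(greedyOn L J g q)
  set C := ∑ g : ↥J → Fin M, ∑ q, blockedCount L J S g q
  have hcover : M ^ #J * #S ≤ A + C :=
    calc M ^ #J * #S = ∑ _g : ↥J → Fin M, #S := by simp
      _ ≤ ∑ g : ↥J → Fin M, ∑ q, (#(greedyOn L J g q) + blockedCount L J S g q) :=
        sum_le_sum fun g _ => card_le_sum_greedyOn_add_blockedCount hL hLS hSJ g
      _ = A + C := by simp only [A, C, sum_add_distrib]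
  have hcharge : M * C + A ≤ M * A :=
    calc M * C + A
        = ∑ q, ∑ s ∈ S, (#(blockers S s) + 1) * #{g : ↥J → Fin M | s ∈ greedyOn L J g q} := by
          simp only [A, C, sum_comm (s := (univ : Finset (↥J → Fin M))), mul_sum,
            mul_sum_blockedCount hL hSJ, sum_card_greedyOn hLS, add_mul, one_mul,
            ← sum_add_distrib]
      _ ≤ ∑ q, ∑ s ∈ S, M * #{g : ↥J → Fin M | s ∈ greedyOn L J g q} :=
        sum_le_sum fun q _ => sum_le_sum fun s hs =>
          Nat.mul_le_mul_right _ (card_blockers_add_one_le hS hs (hjobs s hs))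
      _ = M * A := by
          simp only [A, sum_comm (s := (univ : Finset (↥J → Fin M))), mul_sum,
            sum_card_greedyOn hLS]
  linarith [Nat.mul_le_mul_left M hcover]

theorem stmt9_general (M : ℕ) (hM : 0 < M) (J : Finset (ℝ × ℝ))
    (hjobs : ∀ j ∈ J, j.1 < j.2)
    (OPT : Finset (ℝ × ℝ)) (hOPTsub : OPT ⊆ J) (hOPTsched : IsMSchedule M OPT) :
    (M : ℝ) * OPT.card / (2 * (M : ℝ) - 1) ≤
      (∑ g : (↥J → Fin M), ∑ p : Fin M,
        (maxIS ((J.attach.filter (fun j => g j = p)).image Subtype.val) : ℝ)) /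
        (M : ℝ) ^ J.card := by
  obtain ⟨L, hLS, hL⟩ := exists_list_pairwise_gt_of_injective endKey_injective OPT
  have hcount := mul_pow_card_mul_card_add_le hOPTsched hOPTsub
    (fun j hj => (hjobs j (hOPTsub hj)).le) hL hLS
  have hmaxIS : ∑ g : ↥J → Fin M, ∑ q, #(greedyOn L J g q) ≤
      ∑ g : ↥J → Fin M, ∑ q, maxIS (assigned J g q) :=
    sum_le_sum fun g _ => sum_le_sum fun q _ => card_greedyOn_le_maxIS g q
  have hM1 : (1 : ℝ) ≤ M := by exact_mod_cast hM
  rw [div_le_div_iff₀ (by linarith) (by positivity)]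
  have hcount' := (Nat.cast_le (α := ℝ)).mpr hcount
  have hmaxIS' := (Nat.cast_le (α := ℝ)).mpr hmaxIS
  push_cast at hcount' hmaxIS'
  simp only [assigned] at hmaxIS'
  linarith [mul_le_mul_of_nonneg_right hmaxIS' (by linarith : (0 : ℝ) ≤ 2 * M - 1)]

/-- let `OPT` be a maximum-cardinality `M`-machine schedule among subfamilies
of `J`. If each job of `J` is assigned independently and uniformly at random to one of `M`
machines and on each machine we take a maximum pairwise disjoint subfamily of the jobs
assigned to it, then the expected total number of scheduled jobs is at least
`|OPT| / (2 - 1/M) = M |OPT| / (2M - 1)`. -/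
theorem stmt9 (M : ℕ) (hM : 0 < M) (J : Finset (ℝ × ℝ))
    (hjobs : ∀ j ∈ J, j.1 < j.2)
    (OPT : Finset (ℝ × ℝ)) (hOPTsub : OPT ⊆ J) (hOPTsched : IsMSchedule M OPT)
    (hOPTmax : ∀ T ⊆ J, IsMSchedule M T → T.card ≤ OPT.card) :
    (M : ℝ) * OPT.card / (2 * (M : ℝ) - 1) ≤
      (∑ g : (↥J → Fin M), ∑ p : Fin M,
        (maxIS ((J.attach.filter (fun j => g j = p)).image Subtype.val) : ℝ)) /
        (M : ℝ) ^ J.card :=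
  stmt9_general M hM J hjobs OPT hOPTsub hOPTsched
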